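/- For every natural number m, the sum S(m,x) := \sum_{k=0}^{m}(1+xq^k)\binom{m}{k}_q \frac{(x;q)_{m+1}}{(q^k x^2;q)_{m+1}} x^k q^{k^2} satisfies S(m+1, x) = S(m, x) for all x, i.e., the finite quintuple sum is independent of m (as a rational function in q and x). -/

import Mathlib

/-- The q-shifted factorial `(a;q)_n = ∏_{j=0}^{n-1} (1 - a q^j)`. -/
noncomputable def qPoch {F : Type*} [Field F] (a q : F) (n : ℕ) : F :=
  ∏ j ∈ Finset.range n, (1 - a * q ^ j)

/-- The Gaussian binomial coefficient `(q;q)_m / ((q;q)_k (q;q)_{m-k})`. -/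
noncomputable def qBinom {F : Type*} [Field F] (q : F) (m k : ℕ) : F :=
  qPoch q q m / (qPoch q q k * qPoch q q (m - k))

/-- The finite quintuple sum
`S(m,x) = ∑_{k=0}^m (1+xq^k) binom(m,k)_q (x;q)_{m+1}/(q^k x^2;q)_{m+1} x^k q^{k^2}`. -/
noncomputable def quintupleSum {F : Type*} [Field F] (q x : F) (m : ℕ) : F :=
  ∑ k ∈ Finset.range (m + 1),
    (1 + x * q ^ k) * qBinom q m k *
      (qPoch x q (m + 1) / qPoch (q ^ k * x ^ 2) q (m + 1)) * x ^ k * q ^ (k ^ 2)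

/-!
The summands `T(m, k)` of `S(m)` form a WZ pair with the certificate `G = quintupleCert`:
`T(m+1, k) - T(m, k) = G(m, k+1) - G(m, k)` for `k ≤ m`, and `T(m+1, m+1) = -G(m, m+1)` because
`(1 + x q^{m+1}) (1 - x q^{m+1}) = 1 - x² q^{2m+2}`. Summing over `k`, the certificate telescopes
away and `G(m, 0) = 0`. To check the recurrence, write all four of its terms as multiples of
`[m,k]_q (x;q)_{m+1} x^k q^{k²} / (q^k x²;q)_{m+2}`; after multiplying by `1 - q^{m+1-k}`
(which clears the ratios of Gaussian binomials) the multipliers satisfy a polynomial identity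
in `x`, `q`, `q^k` and `q^{m-k}`.
-/

open Finset

section

variable {F : Type*} [Field F]

lemma qPoch_zero (a q : F) : qPoch a q 0 = 1 :=
  prod_range_zero _

lemma qPoch_succ (a q : F) (n : ℕ) : qPoch a q (n + 1) = qPoch a q n * (1 - a * q ^ n) :=
  prod_range_succ _ _

lemma qPoch_succ' (a q : F) (n : ℕ) : qPoch a q (n + 1) = (1 - a) * qPoch (a * q) q n := by
  simp only [qPoch, prod_range_succ', pow_zero, mul_one, pow_succ', mul_assoc, mul_comm]

lemma qPoch_ne_zero {a q : F} {n : ℕ} (h : ∀ j < n, 1 - a * q ^ j ≠ 0) : qPoch a q n ≠ 0 :=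
  prod_ne_zero_iff.mpr fun j hj => h j (mem_range.mp hj)

lemma qBinom_self {q : F} {m : ℕ} (h : qPoch q q m ≠ 0) : qBinom q m m = 1 := by
  simp [qBinom, qPoch_zero, h]

lemma qBinom_succ_left_mul (q : F) (k n : ℕ) (h : 1 - q ^ (n + 1) ≠ 0) :
    qBinom q (k + n + 1) k * (1 - q ^ (n + 1)) = qBinom q (k + n) k * (1 - q ^ (k + n + 1)) := by
  rw [qBinom, qBinom, show k + n + 1 - k = n + 1 by omega, Nat.add_sub_cancel_left,
    qPoch_succ q q (k + n), qPoch_succ q q n, ← pow_succ', ← pow_succ']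
  field_simp

lemma qBinom_succ_right_mul (q : F) (j n : ℕ) (hj : 1 - q ^ (j + 1) ≠ 0)
    (hn : 1 - q ^ (n + 1) ≠ 0) :
    qBinom q (j + n + 1) (j + 1) * (1 - q ^ (j + 1)) = qBinom q (j + n + 1) j * (1 - q ^ (n + 1)) := by
  rw [qBinom, qBinom, show j + n + 1 - j = n + 1 by omega, show j + n + 1 - (j + 1) = n by omega,
    qPoch_succ q q j, qPoch_succ q q n, ← pow_succ', ← pow_succ']
  field_simp

noncomputable def quintupleTerm (q x : F) (m k : ℕ) : F :=
  (1 + x * q ^ k) * qBinom q m k *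
    (qPoch x q (m + 1) / qPoch (q ^ k * x ^ 2) q (m + 1)) * x ^ k * q ^ (k ^ 2)

lemma quintupleSum_eq_sum_quintupleTerm (q x : F) (m : ℕ) :
    quintupleSum q x m = ∑ k ∈ range (m + 1), quintupleTerm q x m k :=
  rfl

noncomputable def quintupleCert (q x : F) (m : ℕ) : ℕ → F
  | 0 => 0
  | k + 1 => -q ^ (m - k) * qBinom q m k *
      (qPoch x q (m + 1) / qPoch (q ^ (k + 1) * x ^ 2) q (m + 1)) * x ^ (k + 1) * q ^ ((k + 1) ^ 2)

noncomputable def quintupleFactor (q x : F) (m k : ℕ) : F :=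
  qBinom q m k * qPoch x q (m + 1) * x ^ k * q ^ (k ^ 2) / qPoch (q ^ k * x ^ 2) q (m + 2)

variable {q x : F}

lemma one_sub_pow_mul_sq_ne_zero (hx : ∀ j : ℕ, 1 - x ^ 2 * q ^ j ≠ 0) (k j : ℕ) :
    1 - q ^ k * x ^ 2 * q ^ j ≠ 0 := by
  simpa [pow_add, mul_comm, mul_left_comm, mul_assoc] using hx (k + j)

lemma one_sub_mul_quintupleFactor_eq_init (hx : ∀ j : ℕ, 1 - x ^ 2 * q ^ j ≠ 0) (m k : ℕ) :
    (1 - q ^ k * x ^ 2 * q ^ (m + 1)) * quintupleFactor q x m k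
      = qBinom q m k * qPoch x q (m + 1) * x ^ k * q ^ (k ^ 2) / qPoch (q ^ k * x ^ 2) q (m + 1) := by
  rw [quintupleFactor, qPoch_succ _ _ (m + 1), ← div_div,
    mul_div_cancel₀ _ (one_sub_pow_mul_sq_ne_zero hx k (m + 1))]

lemma one_sub_mul_quintupleFactor_eq_tail (hx : ∀ j : ℕ, 1 - x ^ 2 * q ^ j ≠ 0) (m k : ℕ) :
    (1 - q ^ k * x ^ 2) * quintupleFactor q x m k
      = qBinom q m k * qPoch x q (m + 1) * x ^ k * q ^ (k ^ 2)
          / qPoch (q ^ (k + 1) * x ^ 2) q (m + 1) := by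
  have hf : 1 - q ^ k * x ^ 2 ≠ 0 := by simpa using one_sub_pow_mul_sq_ne_zero hx k 0
  rw [quintupleFactor, qPoch_succ' _ _ (m + 1), show q ^ k * x ^ 2 * q = q ^ (k + 1) * x ^ 2 by ring,
    ← div_div, div_right_comm, mul_div_cancel₀ _ hf]

lemma quintupleTerm_eq (hx : ∀ j : ℕ, 1 - x ^ 2 * q ^ j ≠ 0) (m k : ℕ) :
    quintupleTerm q x m k
      = (1 + x * q ^ k) * (1 - q ^ k * x ^ 2 * q ^ (m + 1)) * quintupleFactor q x m k := by
  rw [mul_assoc, one_sub_mul_quintupleFactor_eq_init hx, quintupleTerm]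
  ring

lemma quintupleTerm_succ_mul (hq : ∀ j : ℕ, 1 - q ^ (j + 1) ≠ 0) (k n : ℕ) :
    quintupleTerm q x (k + n + 1) k * (1 - q ^ (n + 1))
      = (1 + x * q ^ k) * (1 - q ^ (k + n + 1)) * (1 - x * q ^ (k + n + 1))
          * quintupleFactor q x (k + n) k := by
  rw [quintupleTerm, quintupleFactor, qPoch_succ x q (k + n + 1)]
  linear_combination (1 + x * q ^ k) * (1 - x * q ^ (k + n + 1)) * qPoch x q (k + n + 1)
    * x ^ k * q ^ (k ^ 2) / qPoch (q ^ k * x ^ 2) q (k + n + 2) * qBinom_succ_left_mul q k n (hq n)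

lemma quintupleCert_succ_eq (hx : ∀ j : ℕ, 1 - x ^ 2 * q ^ j ≠ 0) (k n : ℕ) :
    quintupleCert q x (k + n) (k + 1)
      = -q ^ n * x * q ^ (2 * k + 1) * (1 - q ^ k * x ^ 2) * quintupleFactor q x (k + n) k := by
  rw [mul_assoc, one_sub_mul_quintupleFactor_eq_tail hx, quintupleCert, Nat.add_sub_cancel_left]
  ring

lemma quintupleCert_mul (hx : ∀ j : ℕ, 1 - x ^ 2 * q ^ j ≠ 0) (hq : ∀ j : ℕ, 1 - q ^ (j + 1) ≠ 0)
    (k n : ℕ) :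
    quintupleCert q x (k + n) k * (1 - q ^ (n + 1))
      = -q ^ (n + 1) * (1 - q ^ k) * (1 - q ^ k * x ^ 2 * q ^ (k + n + 1))
          * quintupleFactor q x (k + n) k := by
  rcases k with _ | j
  · simp [quintupleCert]
  · rw [mul_assoc, one_sub_mul_quintupleFactor_eq_init hx, quintupleCert, Nat.add_right_comm j 1 n,
      show j + n + 1 - j = n + 1 by omega]
    linear_combination q ^ (n + 1)
      * (qPoch x q (j + n + 1 + 1) / qPoch (q ^ (j + 1) * x ^ 2) q (j + n + 1 + 1))
      * x ^ (j + 1) * q ^ ((j + 1) ^ 2) * qBinom_succ_right_mul q j n (hq j) (hq n)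

lemma quintupleTerm_succ_sub (hx : ∀ j : ℕ, 1 - x ^ 2 * q ^ j ≠ 0)
    (hq : ∀ j : ℕ, 1 - q ^ (j + 1) ≠ 0) (k n : ℕ) :
    quintupleTerm q x (k + n + 1) k - quintupleTerm q x (k + n) k
      = quintupleCert q x (k + n) (k + 1) - quintupleCert q x (k + n) k := by
  apply mul_right_cancel₀ (hq n)
  linear_combination quintupleTerm_succ_mul (x := x) hq k n
    - (1 - q ^ (n + 1)) * quintupleTerm_eq hx (k + n) k
    - (1 - q ^ (n + 1)) * quintupleCert_succ_eq hx k n + quintupleCert_mul hx hq k n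

lemma quintupleTerm_succ_self (hx : ∀ j : ℕ, 1 - x ^ 2 * q ^ j ≠ 0)
    (hq : ∀ j : ℕ, 1 - q ^ (j + 1) ≠ 0) (m : ℕ) :
    quintupleTerm q x (m + 1) (m + 1) = -quintupleCert q x m (m + 1) := by
  have hP (n : ℕ) : qPoch q q n ≠ 0 := qPoch_ne_zero fun j _ => by simpa [pow_succ'] using hq j
  have hD : qPoch (q ^ (m + 1) * x ^ 2) q (m + 1) ≠ 0 :=
    qPoch_ne_zero fun j _ => one_sub_pow_mul_sq_ne_zero hx (m + 1) j
  have hf : 1 - x ^ 2 * (q ^ (m + 1)) ^ 2 ≠ 0 := by simpa [← pow_mul] using hx ((m + 1) * 2)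
  rw [quintupleTerm, quintupleCert, qBinom_self (hP _), qBinom_self (hP _), Nat.sub_self,
    qPoch_succ x q (m + 1), qPoch_succ _ q (m + 1)]
  generalize qPoch (q ^ (m + 1) * x ^ 2) q (m + 1) = D at hD ⊢
  field_simp
  ring

end

/-- The finite quintuple sum is independent of `m`. -/
theorem quintupleSum_succ_eq {F : Type*} [Field F] (q x : F) (m : ℕ)
    (hx : ∀ j : ℕ, 1 - x ^ 2 * q ^ j ≠ 0) (hq : ∀ j : ℕ, 1 - q ^ (j + 1) ≠ 0) :
    quintupleSum q x (m + 1) = quintupleSum q x m := by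
  have hstep : ∀ k ∈ range (m + 1), quintupleTerm q x (m + 1) k
      = quintupleTerm q x m k + (quintupleCert q x m (k + 1) - quintupleCert q x m k) := by
    intro k hk
    obtain ⟨n, rfl⟩ : ∃ n, m = k + n :=
      Nat.exists_eq_add_of_le (Nat.lt_succ_iff.mp (mem_range.mp hk))
    linear_combination quintupleTerm_succ_sub hx hq k n
  rw [quintupleSum_eq_sum_quintupleTerm, quintupleSum_eq_sum_quintupleTerm, sum_range_succ,
    sum_congr rfl hstep, sum_add_distrib, sum_range_sub, quintupleTerm_succ_self hx hq]
  simp [quintupleCert]
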